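/- Suppose ⟨·,·⟩ is naturally reductive (⟨[X,Y]_𝔪,Z⟩ + ⟨Y,[X,Z]_𝔪⟩ = 0 for all X,Y,Z ∈ 𝔪). Then for every index l, the anticommutator of H with the basis vector Z_l satisfies H·Z_l + Z_l·H = −(3/2) Σ_{i,j} ⟨Z_l, [Z_i,Z_j]_𝔪⟩ Z_i·Z_j in Cl(𝔪). -/

import Mathlib

open scoped BigOperators

/-- The quadratic form `v ↦ −⟨v,v⟩` on the subspace `𝔪`, built from a bilinear form `B`
on the ambient space; the associated Clifford algebra satisfies
`v·w + w·v = −2⟨v,w⟩·1` for `v,w ∈ 𝔪`. -/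
noncomputable def mQF {𝔤 : Type*} [AddCommGroup 𝔤] [Module ℝ 𝔤]
    (𝔪 : Submodule ℝ 𝔤) (B : LinearMap.BilinForm ℝ 𝔤) : QuadraticForm ℝ ↥𝔪 :=
  LinearMap.BilinMap.toQuadraticMap ((-B).compl₁₂ 𝔪.subtype 𝔪.subtype)

/-- The cubic element `H = (1/4) Σ_{i,j,k} ⟨[Z_i,Z_j]_𝔪, Z_k⟩ Z_i·Z_j·Z_k ∈ Cl(𝔪)`. -/
noncomputable def cubicH {𝔤 : Type*} [LieRing 𝔤] [LieAlgebra ℝ 𝔤]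
    (𝔪 : Submodule ℝ 𝔤) (p𝔪 : 𝔤 →ₗ[ℝ] 𝔤) (B : LinearMap.BilinForm ℝ 𝔤)
    {n : ℕ} (Z : Fin n → 𝔤) (hZ𝔪 : ∀ i, Z i ∈ 𝔪) : CliffordAlgebra (mQF 𝔪 B) :=
  (1 / 4 : ℝ) • ∑ i, ∑ j, ∑ k, B (p𝔪 ⁅Z i, Z j⁆) (Z k) •
    (CliffordAlgebra.ι (mQF 𝔪 B) ⟨Z i, hZ𝔪 i⟩ *
      CliffordAlgebra.ι (mQF 𝔪 B) ⟨Z j, hZ𝔪 j⟩ *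
      CliffordAlgebra.ι (mQF 𝔪 B) ⟨Z k, hZ𝔪 k⟩)

/-! Commuting `Z_l` through `Z_i Z_j Z_k` with `Z_a Z_b + Z_b Z_a = -2 δ_ab` gives
`Z_i Z_j Z_k Z_l + Z_l Z_i Z_j Z_k = -2 (δ_li Z_j Z_k - δ_lj Z_i Z_k + δ_lk Z_i Z_j)`.
Natural reductivity makes `c_ijk = ⟨[Z_i, Z_j]_𝔪, Z_k⟩` totally antisymmetric, so each of the
three contractions equals `-2 Σ c_ijl Z_i Z_j`; with the factor `1/4` of `H` this gives `-3/2`. -/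

namespace CliffordAlgebra

variable {R M : Type*} [CommRing R] [AddCommGroup M] [Module R M] {Q : QuadraticForm R M}

theorem ι_mul_ι_mul_ι_mul_ι_add_swap (a b c d : M) :
    ι Q a * ι Q b * ι Q c * ι Q d + ι Q d * (ι Q a * ι Q b * ι Q c) =
      QuadraticMap.polar Q d a • (ι Q b * ι Q c) - QuadraticMap.polar Q d b • (ι Q a * ι Q c)
        + QuadraticMap.polar Q d c • (ι Q a * ι Q b) := by
  have hcomm : ∀ x y (w : CliffordAlgebra Q),
      ι Q x * (ι Q y * w) = QuadraticMap.polar Q x y • w - ι Q y * (ι Q x * w) := by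
    intro x y w
    rw [← mul_assoc, ι_mul_ι_comm, sub_mul, Algebra.smul_def, mul_assoc]
  have hdc : ι Q d * ι Q c = QuadraticMap.polar Q d c • 1 - ι Q c * ι Q d := by
    rw [ι_mul_ι_comm, Algebra.smul_def, mul_one]
  rw [mul_assoc (ι Q a), hcomm d a, hcomm d b, hdc]
  simp only [mul_sub, mul_smul_comm, mul_one, mul_assoc]
  abel

variable {κ : Type*} [Fintype κ] [DecidableEq κ]

theorem sum_smul_ι_mul_ι_mul_ι_mul_ι_add_swap {v : κ → M}
    (hv : ∀ i j, QuadraticMap.polar Q (v i) (v j) = if i = j then -2 else 0)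
    {c : κ → κ → κ → R} (hc₁₂ : ∀ i j k, c j i k = -c i j k)
    (hc₂₃ : ∀ i j k, c i k j = -c i j k) (l : κ) :
    (∑ i, ∑ j, ∑ k, c i j k • (ι Q (v i) * ι Q (v j) * ι Q (v k))) * ι Q (v l)
        + ι Q (v l) * ∑ i, ∑ j, ∑ k, c i j k • (ι Q (v i) * ι Q (v j) * ι Q (v k)) =
      (-6 : R) • ∑ i, ∑ j, c i j l • (ι Q (v i) * ι Q (v j)) := by
  simp only [Finset.sum_mul, Finset.mul_sum, ← Finset.sum_add_distrib, smul_mul_assoc,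
    mul_smul_comm, ← smul_add, ι_mul_ι_mul_ι_mul_ι_add_swap, hv]
  simp only [smul_add, smul_sub, Finset.sum_add_distrib, Finset.sum_sub_distrib, ite_smul,
    zero_smul, smul_ite, smul_zero, Finset.sum_ite_irrel, Finset.sum_const_zero,
    Finset.sum_ite_eq, Finset.mem_univ, if_true]
  have hcyc : ∀ i j, c l i j = c i j l := fun i j => by
    rw [hc₂₃ l j i, ← hc₁₂ l j i, hc₂₃ j i l, hc₁₂ i j l, neg_neg]
  simp only [hcyc, hc₂₃ _ _ l, Finset.smul_sum, ← Finset.sum_sub_distrib,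
    ← Finset.sum_add_distrib]
  refine Finset.sum_congr rfl fun i _ => Finset.sum_congr rfl fun j _ => ?_
  module

end CliffordAlgebra

theorem mQF_polar {𝔤 : Type*} [AddCommGroup 𝔤] [Module ℝ 𝔤] (𝔪 : Submodule ℝ 𝔤)
    (B : LinearMap.BilinForm ℝ 𝔤) (x y : 𝔪) :
    QuadraticMap.polar (mQF 𝔪 B) x y = -(B x y + B y x) := by
  rw [mQF, LinearMap.BilinMap.polar_toQuadraticMap]
  simp only [LinearMap.compl₁₂_apply, Submodule.subtype_apply, LinearMap.neg_apply, neg_add]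

theorem bilin_proj_lie_swap_of_naturallyReductive {R 𝔤 : Type*} [CommRing R] [LieRing 𝔤]
    [LieAlgebra R 𝔤] {𝔪 : Submodule R 𝔤} {p : 𝔤 →ₗ[R] 𝔤} {B : LinearMap.BilinForm R 𝔤}
    (hmem : ∀ x, p x ∈ 𝔪) (hBsymm : ∀ x ∈ 𝔪, ∀ y ∈ 𝔪, B x y = B y x)
    (hnat : ∀ x ∈ 𝔪, ∀ y ∈ 𝔪, ∀ z ∈ 𝔪, B (p ⁅x, y⁆) z + B y (p ⁅x, z⁆) = 0)
    {x y z : 𝔤} (hx : x ∈ 𝔪) (hy : y ∈ 𝔪) (hz : z ∈ 𝔪) :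
    B (p ⁅x, z⁆) y = -B (p ⁅x, y⁆) z := by
  rw [← hBsymm y hy _ (hmem _)]
  exact eq_neg_of_add_eq_zero_right (hnat x hx y hy z hz)

theorem stmt10_general
    {𝔤 : Type*} [LieRing 𝔤] [LieAlgebra ℝ 𝔤]
    (𝔪 : Submodule ℝ 𝔤)
    (p𝔪 : 𝔤 →ₗ[ℝ] 𝔤)
    (hmem𝔪 : ∀ x, p𝔪 x ∈ 𝔪)
    (B : LinearMap.BilinForm ℝ 𝔤)
    (hBsymm : ∀ x ∈ 𝔪, ∀ y ∈ 𝔪, B x y = B y x)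
    (hnat : ∀ x ∈ 𝔪, ∀ y ∈ 𝔪, ∀ z ∈ 𝔪, B (p𝔪 ⁅x, y⁆) z + B y (p𝔪 ⁅x, z⁆) = 0)
    {n : ℕ} (Z : Fin n → 𝔤) (hZ𝔪 : ∀ i, Z i ∈ 𝔪)
    (hZon : ∀ i j, B (Z i) (Z j) = if i = j then 1 else 0) :
    ∀ l, cubicH 𝔪 p𝔪 B Z hZ𝔪 * CliffordAlgebra.ι (mQF 𝔪 B) ⟨Z l, hZ𝔪 l⟩
        + CliffordAlgebra.ι (mQF 𝔪 B) ⟨Z l, hZ𝔪 l⟩ * cubicH 𝔪 p𝔪 B Z hZ𝔪 =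
      (-(3 / 2) : ℝ) • ∑ i, ∑ j, B (Z l) (p𝔪 ⁅Z i, Z j⁆) •
        (CliffordAlgebra.ι (mQF 𝔪 B) ⟨Z i, hZ𝔪 i⟩ *
          CliffordAlgebra.ι (mQF 𝔪 B) ⟨Z j, hZ𝔪 j⟩) := by
  intro l
  have hpolar : ∀ i j, QuadraticMap.polar (mQF 𝔪 B) ⟨Z i, hZ𝔪 i⟩ ⟨Z j, hZ𝔪 j⟩ =
      if i = j then -2 else 0 := fun i j => by
    rw [mQF_polar, hZon, hZon]
    rcases eq_or_ne i j with rfl | hij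
    · norm_num
    · simp [hij, hij.symm]
  have hc₁₂ : ∀ i j k, B (p𝔪 ⁅Z j, Z i⁆) (Z k) = -B (p𝔪 ⁅Z i, Z j⁆) (Z k) := fun i j k => by
    rw [← lie_skew, map_neg, map_neg, LinearMap.neg_apply]
  have hc₂₃ : ∀ i j k, B (p𝔪 ⁅Z i, Z k⁆) (Z j) = -B (p𝔪 ⁅Z i, Z j⁆) (Z k) := fun i j k =>
    bilin_proj_lie_swap_of_naturallyReductive hmem𝔪 hBsymm hnat (hZ𝔪 i) (hZ𝔪 j) (hZ𝔪 k)
  rw [cubicH, smul_mul_assoc, mul_smul_comm, ← smul_add,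
    CliffordAlgebra.sum_smul_ι_mul_ι_mul_ι_mul_ι_add_swap hpolar hc₁₂ hc₂₃, smul_smul,
    show (1 / 4 : ℝ) * -6 = -(3 / 2) by norm_num]
  simp_rw [hBsymm (Z l) (hZ𝔪 l) _ (hmem𝔪 _)]

/-- On a naturally reductive space, the anticommutator of the cubic
element `H` with any `Z_l` is
`H·Z_l + Z_l·H = −(3/2) Σ_{i,j} ⟨Z_l,[Z_i,Z_j]_𝔪⟩ Z_i·Z_j`. -/
theorem stmt10
    {𝔤 : Type*} [LieRing 𝔤] [LieAlgebra ℝ 𝔤] [FiniteDimensional ℝ 𝔤]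
    (𝔥 𝔪 : Submodule ℝ 𝔤)
    (p𝔥 p𝔪 : 𝔤 →ₗ[ℝ] 𝔤)
    (hsum : ∀ x, p𝔥 x + p𝔪 x = x)
    (hmem𝔥 : ∀ x, p𝔥 x ∈ 𝔥) (hmem𝔪 : ∀ x, p𝔪 x ∈ 𝔪)
    (hid𝔥 : ∀ x ∈ 𝔥, p𝔥 x = x) (hid𝔪 : ∀ x ∈ 𝔪, p𝔪 x = x)
    (hsub : ∀ x ∈ 𝔥, ∀ y ∈ 𝔥, ⁅x, y⁆ ∈ 𝔥)
    (hhm : ∀ x ∈ 𝔥, ∀ y ∈ 𝔪, ⁅x, y⁆ ∈ 𝔪)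
    (B : LinearMap.BilinForm ℝ 𝔤)
    (hBsymm : ∀ x ∈ 𝔪, ∀ y ∈ 𝔪, B x y = B y x)
    (hBpos : ∀ x ∈ 𝔪, x ≠ 0 → 0 < B x x)
    (hnat : ∀ x ∈ 𝔪, ∀ y ∈ 𝔪, ∀ z ∈ 𝔪, B (p𝔪 ⁅x, y⁆) z + B y (p𝔪 ⁅x, z⁆) = 0)
    {n : ℕ} (Z : Fin n → 𝔤) (hZ𝔪 : ∀ i, Z i ∈ 𝔪)
    (hZon : ∀ i j, B (Z i) (Z j) = if i = j then 1 else 0)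
    (hZspan : Submodule.span ℝ (Set.range Z) = 𝔪) :
    ∀ l, cubicH 𝔪 p𝔪 B Z hZ𝔪 * CliffordAlgebra.ι (mQF 𝔪 B) ⟨Z l, hZ𝔪 l⟩
        + CliffordAlgebra.ι (mQF 𝔪 B) ⟨Z l, hZ𝔪 l⟩ * cubicH 𝔪 p𝔪 B Z hZ𝔪 =
      (-(3 / 2) : ℝ) • ∑ i, ∑ j, B (Z l) (p𝔪 ⁅Z i, Z j⁆) •
        (CliffordAlgebra.ι (mQF 𝔪 B) ⟨Z i, hZ𝔪 i⟩ *
          CliffordAlgebra.ι (mQF 𝔪 B) ⟨Z j, hZ𝔪 j⟩) :=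
  stmt10_general 𝔪 p𝔪 hmem𝔪 B hBsymm hnat Z hZ𝔪 hZon
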